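/- arXiv:2603.20722 — 2 statements merged into one kernel-verified Lean document; each statement's English description precedes it below -/
import Mathlib

section
/- Let n ≥ 3 and k ∈ ℤ_n nonzero, with n ≡ 0 (mod 4) and k odd. Then for each j ∈ {0,1,2,3}, the set C = {u_{4i+j}, v_{4i+j+2} : i ∈ ℤ_n} is a perfect code in the generalized Petersen graph GP(n,k), i.e., C is an independent set and every vertex not in C has exactly one neighbor in C. -/
/-- The generalized Petersen graph GP(n,k): vertices are `Sum.inl i` (outer, u_i)
and `Sum.inr i` (inner, v_i) for `i : ZMod n`. -/
def GP (n k : ℕ) : SimpleGraph (ZMod n ⊕ ZMod n) where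
  Adj x y :=
    match x, y with
    | .inl i, .inl j => i ≠ j ∧ (j = i + 1 ∨ i = j + 1)
    | .inl i, .inr j => i = j
    | .inr i, .inl j => i = j
    | .inr i, .inr j => i ≠ j ∧ (j = i + (k : ZMod n) ∨ i = j + (k : ZMod n))
  symm := ⟨by rintro (i|i) (j|j) h <;> simp_all <;> tauto⟩
  loopless := ⟨by rintro (i|i) h <;> simp_all⟩

/-- A perfect code: an independent set such that every vertex not in `C`
has exactly one neighbor in `C`. -/
def IsPerfectCode {V : Type*} (G : SimpleGraph V) (C : Set V) : Prop :=
  (∀ x ∈ C, ∀ y ∈ C, ¬ G.Adj x y) ∧ ∀ x ∉ C, ∃! y, y ∈ C ∧ G.Adj x y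

/-- A total perfect code: every vertex has exactly one neighbor in `C`. -/
def IsTotalPerfectCode {V : Type*} (G : SimpleGraph V) (C : Set V) : Prop :=
  ∀ x, ∃! y, y ∈ C ∧ G.Adj x y

/-!
Reducing indices mod 4 maps GP(n,k) onto GP(4,k), which for odd k is the cube Q₃. This map is a
covering, i.e. a bijection from each neighbourhood onto the neighbourhood of the image: the
neighbours of a vertex are obtained by three moves (±1 on the outer cycle, ±k on the inner one,
switching rims) commuting with the reduction, and in GP(4,k) these moves are pairwise distinct
and move every vertex because 2k ≢ 0 (mod 4). Preimages of perfect codes under coverings are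
perfect codes, and C is the preimage of the antipodal pair {u_j, v_{j+2}} of the cube.
-/

theorem IsPerfectCode.preimage {V W : Type*} {G : SimpleGraph V} {H : SimpleGraph W} {f : V → W}
    (hf : ∀ x, Set.BijOn f (G.neighborSet x) (H.neighborSet (f x))) {C : Set W}
    (hC : IsPerfectCode H C) : IsPerfectCode G (f ⁻¹' C) := by
  refine ⟨fun x hx y hy hxy => hC.1 _ hx _ hy ((hf x).mapsTo hxy), fun x hx => ?_⟩
  obtain ⟨z, ⟨hzC, hxz⟩, hz_unique⟩ := hC.2 (f x) hx
  obtain ⟨y, hxy, rfl⟩ := (hf x).surjOn hxz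
  refine ⟨y, ⟨hzC, hxy⟩, fun y' ⟨hy'C, hxy'⟩ => (hf x).injOn hxy' hxy ?_⟩
  exact hz_unique _ ⟨hy'C, (hf x).mapsTo hxy'⟩

theorem ZMod.exists_eq_mul_add_iff {m n : ℕ} (hmn : m ∣ n) (x c : ZMod n) :
    (∃ i, x = m * i + c) ↔ ZMod.castHom hmn (ZMod m) x = ZMod.castHom hmn (ZMod m) c := by
  constructor
  · rintro ⟨i, rfl⟩
    rw [map_add, map_mul, map_natCast, ZMod.natCast_self, zero_mul, zero_add]
  · intro h
    obtain ⟨z, hz⟩ := ZMod.intCast_surjective (x - c)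
    have hz0 : ((z : ℤ) : ZMod m) = 0 := by
      rw [← map_intCast (ZMod.castHom hmn (ZMod m)), hz, map_sub, h, sub_self]
    obtain ⟨t, rfl⟩ := (ZMod.intCast_zmod_eq_zero_iff_dvd z m).mp hz0
    exact ⟨t, by rw [← sub_eq_iff_eq_add, ← hz]; push_cast; ring⟩

theorem ZMod.two_mul_natCast_ne_zero_of_odd {k : ℕ} (hk : k % 2 = 1) : (2 * k : ZMod 4) ≠ 0 := by
  rw [← ZMod.natCast_mod]
  rcases (by omega : k % 4 = 1 ∨ k % 4 = 3) with h | h <;> rw [h] <;> decide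

instance (n k : ℕ) : DecidableRel (GP n k).Adj
  | .inl _, .inl _ => inferInstanceAs (Decidable (_ ∧ _))
  | .inl _, .inr _ => inferInstanceAs (Decidable (_ = _))
  | .inr _, .inl _ => inferInstanceAs (Decidable (_ = _))
  | .inr _, .inr _ => inferInstanceAs (Decidable (_ ∧ _))

namespace GP

variable {R S : Type*} [Ring R] [Ring S]

def step (k : R) : Fin 3 → R ⊕ R → R ⊕ R
  | 0, .inl a => .inl (a + 1)
  | 1, .inl a => .inl (a - 1)
  | 2, .inl a => .inr a
  | 0, .inr a => .inr (a + k)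
  | 1, .inr a => .inr (a - k)
  | 2, .inr a => .inl a

theorem map_step (φ : R →+* S) (k : R) (s : Fin 3) (x : R ⊕ R) :
    Sum.map φ φ (step k s x) = step (φ k) s (Sum.map φ φ x) := by
  fin_cases s <;> cases x <;> simp [step]

theorem step_ne_self {k : R} (h2k : 2 * k ≠ 0) (s : Fin 3) (x : R ⊕ R) : step k s x ≠ x := by
  have : Nontrivial R := nontrivial_of_ne _ _ h2k
  have hk : k ≠ 0 := right_ne_zero_of_mul h2k
  fin_cases s <;> cases x <;> simp [step, hk]

theorem step_injective {k : R} (h2k : 2 * k ≠ 0) (x : R ⊕ R) : Function.Injective (step k · x) := by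
  have h2 : (2 : R) ≠ 0 := left_ne_zero_of_mul h2k
  intro s t h
  fin_cases s <;> fin_cases t <;> cases x <;>
    simp [step, sub_eq_add_neg, eq_neg_iff_add_eq_zero, neg_eq_iff_add_eq_zero, ← two_mul,
      h2, h2k] at h ⊢

theorem adj_iff_exists_step {n k : ℕ} {x y : ZMod n ⊕ ZMod n} :
    (GP n k).Adj x y ↔ x ≠ y ∧ ∃ s, y = step (k : ZMod n) s x := by
  cases x <;> cases y <;> simp [GP, step, Fin.exists_fin_succ] <;> grind

theorem mod_right (n k : ℕ) : GP n (k % n) = GP n k := by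
  ext (a | a) (b | b) <;> simp [GP, ZMod.natCast_mod]

def reduce {m n : ℕ} (hmn : m ∣ n) : ZMod n ⊕ ZMod n → ZMod m ⊕ ZMod m :=
  Sum.map (ZMod.castHom hmn (ZMod m)) (ZMod.castHom hmn (ZMod m))

theorem reduce_step {m n : ℕ} (hmn : m ∣ n) (k : ℕ) (s : Fin 3) (x : ZMod n ⊕ ZMod n) :
    reduce hmn (step (k : ZMod n) s x) = step (k : ZMod m) s (reduce hmn x) := by
  rw [reduce, map_step, map_natCast]

theorem bijOn_reduce {m n k : ℕ} (hmn : m ∣ n) (h2k : (2 * k : ZMod m) ≠ 0)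
    (x : ZMod n ⊕ ZMod n) :
    Set.BijOn (reduce hmn) ((GP n k).neighborSet x) ((GP m k).neighborSet (reduce hmn x)) := by
  simp only [Set.BijOn, Set.MapsTo, Set.InjOn, Set.SurjOn, Set.subset_def, Set.mem_image,
    SimpleGraph.mem_neighborSet, adj_iff_exists_step]
  refine ⟨?_, ?_, ?_⟩
  · rintro _ ⟨-, s, rfl⟩
    rw [reduce_step]
    exact ⟨(step_ne_self h2k s _).symm, s, rfl⟩
  · rintro _ ⟨-, s, rfl⟩ _ ⟨-, t, rfl⟩ hst
    rw [reduce_step, reduce_step] at hst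
    rw [step_injective h2k _ hst]
  · rintro _ ⟨hne, s, rfl⟩
    refine ⟨step (k : ZMod n) s x, ⟨fun h => hne ?_, s, rfl⟩, reduce_step hmn k s x⟩
    rw [← reduce_step, ← h]

theorem isPerfectCode_four {k : ℕ} (hk : k % 2 = 1) (j : ZMod 4) :
    IsPerfectCode (GP 4 k) {.inl j, .inr (j + 2)} := by
  have hcube : ∀ j : ZMod 4, IsPerfectCode (GP 4 1) {.inl j, .inr (j + 2)} ∧
      IsPerfectCode (GP 4 3) {.inl j, .inr (j + 2)} := by
    simp only [IsPerfectCode, ExistsUnique, Set.mem_insert_iff, Set.mem_singleton_iff]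
    set_option synthInstance.maxSize 1000 in decide
  rw [← mod_right]
  rcases (by omega : k % 4 = 1 ∨ k % 4 = 3) with h | h <;> rw [h]
  exacts [(hcube j).1, (hcube j).2]

theorem setOf_four_mul_add_eq_preimage_reduce {n : ℕ} (hn : 4 ∣ n) (j : ℕ) :
    {x | ∃ i : ZMod n, x = .inl (4 * i + (j : ZMod n)) ∨ x = .inr (4 * i + (j : ZMod n) + 2)} =
      reduce hn ⁻¹' {.inl (j : ZMod 4), .inr ((j : ZMod 4) + 2)} := by
  ext (a | a) <;>
    simp only [Set.mem_ofPred_eq, Set.mem_preimage, reduce, Sum.map_inl, Sum.map_inr,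
      Set.mem_insert_iff, Set.mem_singleton_iff, Sum.inl.injEq, Sum.inr.injEq, reduceCtorEq,
      or_false, false_or, add_assoc]
  · simpa only [Nat.cast_ofNat, map_natCast] using ZMod.exists_eq_mul_add_iff hn a j
  · simpa only [Nat.cast_ofNat, map_natCast, map_add, map_ofNat]
      using ZMod.exists_eq_mul_add_iff hn a (j + 2)

end GP

theorem stmt_0_general (n k : ℕ)
    (h4 : n % 4 = 0) (hk2 : k % 2 = 1) (j : ℕ) :
    IsPerfectCode (GP n k)
      {x | ∃ i : ZMod n, x = .inl (4 * i + (j : ZMod n)) ∨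
        x = .inr (4 * i + (j : ZMod n) + 2)} := by
  have hdvd : 4 ∣ n := Nat.dvd_of_mod_eq_zero h4
  rw [GP.setOf_four_mul_add_eq_preimage_reduce hdvd]
  exact (GP.isPerfectCode_four hk2 j).preimage
    (GP.bijOn_reduce hdvd (ZMod.two_mul_natCast_ne_zero_of_odd hk2))

/-- Lemma 2.1: for n ≡ 0 (mod 4) and k odd, {u_{4i+j}, v_{4i+j+2} : i ∈ ℤ_n}
is a perfect code in GP(n,k), for each j ∈ {0,1,2,3}. -/
theorem stmt_0 (n k : ℕ) (hn : 3 ≤ n) (hk0 : (k : ZMod n) ≠ 0)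
    (h4 : n % 4 = 0) (hk2 : k % 2 = 1) (j : ℕ) (hj : j < 4) :
    IsPerfectCode (GP n k)
      {x | ∃ i : ZMod n, x = .inl (4 * i + (j : ZMod n)) ∨
        x = .inr (4 * i + (j : ZMod n) + 2)} :=
  stmt_0_general n k h4 hk2 j
end

section
/- Let C be a total perfect code in GP(n,k). If some edge of the outer cycle has both endpoints in C (i.e., u_ℓ, u_{ℓ+1} ∈ C for some ℓ), then no spoke edge has both endpoints in C (i.e., there is no m with u_m ∈ C and v_m ∈ C). -/
/-!
Let `F i, G i ∈ {0, 1}` record whether `u_i`, resp. `v_i`, lies in `C`. Total perfection reads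
`F (i-1) + F (i+1) + G i = 1` at `u_i` and `F i + G (i-k) + G (i+k) = 1` at `v_i`; when `2k = 0`
the latter becomes `F i + G (i+k) = 1` and counting forces `F = 0`. Otherwise counting gives
`∑ F = ∑ G = n / 3`, and a local argument shows `F j + F (j+4) ≤ 1`, so that
`F (i-1) + F (i+1) + F (i+3) ≤ 1` with total `n`: equality holds everywhere. Hence
`(F, G) (i+3) = (G, F) i`, so a spoke `u_m v_m` inside `C` puts both `u_i` and `v_i` in `C` for
all `i ∈ m + 3ℕ`, and this progression meets `{l, l+1, l+2}`, where an outer edge `u_l u_{l+1}`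
inside `C` rules that out.
-/

open Finset

theorem IsTotalPerfectCode.sum_indicator_eq_one {V : Type*} {G : SimpleGraph V}
    {C : Set V} (hC : IsTotalPerfectCode G C) {x : V} {s : Finset V}
    (hs : ∀ y, G.Adj x y ↔ y ∈ s) : ∑ y ∈ s, C.indicator (1 : V → ℕ) y = 1 := by
  obtain ⟨y, ⟨hyC, hxy⟩, hy⟩ := hC x
  rw [sum_eq_single_of_mem y ((hs y).1 hxy) fun z hz hzy =>
    Set.indicator_of_notMem (fun hzC => hzy (hy z ⟨hzC, (hs z).2 hz⟩)) _]
  exact Set.indicator_of_mem hyC _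

theorem sum_comp_add_right {A M : Type*} [AddGroup A] [Fintype A] [AddCommMonoid M] (f : A → M)
    (c : A) : ∑ i, f (i + c) = ∑ i, f i :=
  Fintype.sum_equiv (Equiv.addRight c) _ _ fun _ => rfl

theorem sum_comp_sub_right {A M : Type*} [AddGroup A] [Fintype A] [AddCommMonoid M] (f : A → M)
    (c : A) : ∑ i, f (i - c) = ∑ i, f i :=
  Fintype.sum_equiv (Equiv.subRight c) _ _ fun _ => rfl

theorem ZMod.exists_add_mul_add_eq {n : ℕ} [NeZero n] {d : ℕ} (hd : 0 < d) (m x : ZMod n) :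
    ∃ q t : ℕ, t < d ∧ m + d * q + t = x := by
  refine ⟨(x - m).val / d, (x - m).val % d, Nat.mod_lt _ hd, ?_⟩
  have := congrArg (Nat.cast : ℕ → ZMod n) (Nat.div_add_mod (x - m).val d)
  rw [ZMod.natCast_zmod_val] at this
  push_cast at this
  linear_combination this

section RimEquations

variable {A : Type*} [CommRing A] {F G : A → ℕ} {k : A}

theorem eq_zero_of_outer_edge (hO : ∀ i, F (i - 1) + F (i + 1) + G i = 1) {l : A}
    (hl : F l = 1) (hl1 : F (l + 1) = 1) : G l = 0 ∧ G (l + 1) = 0 ∧ F (l + 2) = 0 := by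
  have := hO l; have := hO (l + 1)
  ring_nf at *
  omega

theorem inner_triple_le_one (hO : ∀ i, F (i - 1) + F (i + 1) + G i = 1) {p : A}
    (h0 : G p = 0) (h4 : G (p + 4) = 0) : G (p - 2) + G (p + 2) + G (p + 6) ≤ 1 := by
  have := hO (p - 2); have := hO p; have := hO (p + 2); have := hO (p + 4); have := hO (p + 6)
  ring_nf at *
  omega

theorem outer_add_four_le_one (hO : ∀ i, F (i - 1) + F (i + 1) + G i = 1)
    (hI : ∀ i, F i + G (i - k) + G (i + k) = 1) (j : A) : F j + F (j + 4) ≤ 1 := by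
  by_contra! h
  have hF : F (j - 2) = 0 ∧ F (j + 2) = 0 ∧ F (j + 6) = 0 := by
    have := hO (j - 1); have := hO (j + 1); have := hO (j + 5)
    ring_nf at *; omega
  have hG : G (j - k) = 0 ∧ G (j + k) = 0 ∧ G (j - k + 4) = 0 ∧ G (j + k + 4) = 0 := by
    have := hI j; have := hI (j + 4)
    ring_nf at *; omega
  have := inner_triple_le_one hO hG.1 hG.2.2.1
  have := inner_triple_le_one hO hG.2.1 hG.2.2.2
  -- `u_{j-2}, u_{j+2}, u_{j+6} ∉ C`, so `v_{j-2}, v_{j+2}, v_{j+6}` need three inner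
  -- `C`-neighbours between them, while the two bounds above allow only two.
  have := hI (j - 2); have := hI (j + 2); have := hI (j + 6)
  ring_nf at *
  omega

variable [Fintype A]

theorem two_mul_sum_add_sum_eq_card (hO : ∀ i, F (i - 1) + F (i + 1) + G i = 1) :
    2 * ∑ i, F i + ∑ i, G i = Fintype.card A := by
  have := Finset.sum_congr rfl fun i (_ : i ∈ univ) => hO i
  rw [sum_add_distrib, sum_add_distrib, sum_comp_sub_right F 1, sum_comp_add_right F 1] at this
  simpa [two_mul] using this

theorem sum_add_two_mul_sum_eq_card (hI : ∀ i, F i + G (i - k) + G (i + k) = 1) :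
    ∑ i, F i + 2 * ∑ i, G i = Fintype.card A := by
  have := Finset.sum_congr rfl fun i (_ : i ∈ univ) => hI i
  rw [sum_add_distrib, sum_add_distrib, sum_comp_sub_right G k, sum_comp_add_right G k] at this
  simpa [two_mul, add_assoc] using this

theorem outer_eq_zero_of_antipodal (hO : ∀ i, F (i - 1) + F (i + 1) + G i = 1)
    (hI : ∀ i, F i + G (i + k) = 1) (i : A) : F i = 0 := by
  have hsum : ∑ i, F i + ∑ i, G i = Fintype.card A := by
    have := Finset.sum_congr rfl fun i (_ : i ∈ univ) => hI i
    rw [sum_add_distrib, sum_comp_add_right G k] at this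
    simpa using this
  have hzero : ∑ i, F i = 0 := by
    have := two_mul_sum_add_sum_eq_card hO
    omega
  exact (sum_eq_zero_iff.1 hzero) i (mem_univ i)

theorem outer_triple_eq_one (hO : ∀ i, F (i - 1) + F (i + 1) + G i = 1)
    (hI : ∀ i, F i + G (i - k) + G (i + k) = 1) (i : A) :
    F (i - 1) + F (i + 1) + F (i + 3) = 1 := by
  have hle : ∀ i, F (i - 1) + F (i + 1) + F (i + 3) ≤ 1 := fun i => by
    have := hO i; have := hO (i + 2); have := outer_add_four_le_one hO hI (i - 1)
    ring_nf at *; omega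
  have hsum : ∑ i, (F (i - 1) + F (i + 1) + F (i + 3)) = ∑ _i : A, 1 := by
    have := two_mul_sum_add_sum_eq_card hO
    have := sum_add_two_mul_sum_eq_card hI
    rw [sum_add_distrib, sum_add_distrib, sum_comp_sub_right F 1, sum_comp_add_right F 1,
      sum_comp_add_right F 3]
    simp only [sum_const, card_univ, smul_eq_mul, mul_one]
    omega
  exact (sum_eq_sum_iff_of_le fun i _ => hle i).1 hsum i (mem_univ i)

theorem add_three_swap (hO : ∀ i, F (i - 1) + F (i + 1) + G i = 1)
    (hI : ∀ i, F i + G (i - k) + G (i + k) = 1) (i : A) :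
    F (i + 3) = G i ∧ G (i + 3) = F i := by
  have := hO i; have := hO (i + 3)
  have := outer_triple_eq_one hO hI i; have := outer_triple_eq_one hO hI (i + 1)
  ring_nf at *
  omega

theorem eq_one_add_three_mul (hO : ∀ i, F (i - 1) + F (i + 1) + G i = 1)
    (hI : ∀ i, F i + G (i - k) + G (i + k) = 1) {m : A} (hF : F m = 1) (hG : G m = 1) (q : ℕ) :
    F (m + 3 * q) = 1 ∧ G (m + 3 * q) = 1 := by
  induction q with
  | zero => simpa using ⟨hF, hG⟩
  | succ q ih =>
    obtain ⟨hF', hG'⟩ := add_three_swap hO hI (m + 3 * q)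
    rw [Nat.cast_succ, mul_add_one, ← add_assoc, hF', hG']
    exact ⟨ih.2, ih.1⟩

end RimEquations

namespace GP

variable {n k : ℕ}

theorem adj_inl_iff (h1 : (1 : ZMod n) ≠ 0) (i : ZMod n) (y : ZMod n ⊕ ZMod n) :
    (GP n k).Adj (.inl i) y ↔ y ∈ ({.inl (i - 1), .inl (i + 1), .inr i} : Finset _) := by
  rcases y with j | j <;> simp [GP]
  · grind
  · exact eq_comm

theorem adj_inr_iff (hk : (k : ZMod n) ≠ 0) (i : ZMod n) (y : ZMod n ⊕ ZMod n) :
    (GP n k).Adj (.inr i) y ↔ y ∈ ({.inl i, .inr (i - k), .inr (i + k)} : Finset _) := by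
  rcases y with j | j <;> simp [GP]
  · exact eq_comm
  · grind

end GP

namespace IsTotalPerfectCode

variable {n k : ℕ} {C : Set (ZMod n ⊕ ZMod n)}

theorem GP_outer_count (hC : IsTotalPerfectCode (GP n k) C) (h2 : (2 : ZMod n) ≠ 0)
    (i : ZMod n) :
    C.indicator 1 (.inl (i - 1)) + C.indicator 1 (.inl (i + 1)) + C.indicator 1 (.inr i) = 1 := by
  have h1 : (1 : ZMod n) ≠ 0 := fun h => h2 (by rw [← one_add_one_eq_two, h, add_zero])
  have := hC.sum_indicator_eq_one (GP.adj_inl_iff h1 i)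
  rwa [sum_insert, sum_pair, ← add_assoc] at this
  · simp
  · simp only [mem_insert, mem_singleton, Sum.inl.injEq, reduceCtorEq, or_false]
    intro h
    exact h2 (by linear_combination -h)

theorem GP_inner_count (hC : IsTotalPerfectCode (GP n k) C) (h2k : 2 * (k : ZMod n) ≠ 0)
    (i : ZMod n) :
    C.indicator 1 (.inl i) + C.indicator 1 (.inr (i - k)) + C.indicator 1 (.inr (i + k)) = 1 := by
  have hk : (k : ZMod n) ≠ 0 := fun h => h2k (by rw [h, mul_zero])
  have := hC.sum_indicator_eq_one (GP.adj_inr_iff hk i)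
  rwa [sum_insert, sum_pair, ← add_assoc] at this
  · simp only [ne_eq, Sum.inr.injEq]
    intro h
    exact h2k (by linear_combination -h)
  · simp

theorem GP_inner_count_of_two_mul_eq_zero (hC : IsTotalPerfectCode (GP n k) C)
    (hk : (k : ZMod n) ≠ 0) (h2k : 2 * (k : ZMod n) = 0) (i : ZMod n) :
    C.indicator 1 (.inl i) + C.indicator 1 (.inr (i + k)) = 1 := by
  have := hC.sum_indicator_eq_one (GP.adj_inr_iff hk i)
  rwa [show i - k = i + k by linear_combination -h2k, insert_eq_of_mem (mem_singleton_self _),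
    sum_pair (by simp)] at this

end IsTotalPerfectCode

/-- Lemma 4.3: if a total perfect code C in GP(n,k) contains both endpoints of
an outer edge, then it contains both endpoints of no spoke. -/
theorem stmt_11 (n k : ℕ) (hn : 3 ≤ n) (hk0 : (k : ZMod n) ≠ 0)
    (C : Set (ZMod n ⊕ ZMod n)) (hC : IsTotalPerfectCode (GP n k) C)
    (h : ∃ l : ZMod n, Sum.inl l ∈ C ∧ Sum.inl (l + 1) ∈ C) :
    ∀ m : ZMod n, ¬ (Sum.inl m ∈ C ∧ Sum.inr m ∈ C) := by
  rintro m ⟨hum, hvm⟩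
  obtain ⟨l, hl, hl1⟩ := h
  have : NeZero n := ⟨by omega⟩
  have h2 : (2 : ZMod n) ≠ 0 := fun h =>
    absurd (Nat.le_of_dvd two_pos ((ZMod.natCast_eq_zero_iff 2 n).1 (mod_cast h))) (by omega)
  set F : ZMod n → ℕ := fun i => C.indicator 1 (.inl i)
  set G : ZMod n → ℕ := fun i => C.indicator 1 (.inr i)
  have hO : ∀ i, F (i - 1) + F (i + 1) + G i = 1 := hC.GP_outer_count h2
  have hFl : F l = 1 := Set.indicator_of_mem hl 1
  by_cases h2k : 2 * (k : ZMod n) = 0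
  · have := outer_eq_zero_of_antipodal hO (hC.GP_inner_count_of_two_mul_eq_zero hk0 h2k) l
    omega
  obtain ⟨hGl, hGl1, hFl2⟩ := eq_zero_of_outer_edge hO hFl (Set.indicator_of_mem hl1 1)
  obtain ⟨q, t, ht, hx⟩ := ZMod.exists_add_mul_add_eq (d := 3) (by norm_num) m (l + 2)
  obtain ⟨hFq, hGq⟩ := eq_one_add_three_mul hO (hC.GP_inner_count h2k)
    (Set.indicator_of_mem hum 1) (Set.indicator_of_mem hvm 1) q
  rw [Nat.cast_ofNat] at hx
  rw [eq_sub_of_add_eq hx] at hFq hGq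
  interval_cases t <;> ring_nf at hFq hGq hGl hGl1 hFl2 <;> omega
end
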